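/- arXiv:1201.1028 — 2 statements merged into one kernel-verified Lean document; each statement's English description precedes it below -/
import Mathlib

section
/- Let (Y,g) be an oriented Riemannian 3-manifold of constant sectional curvature κ. For any symmetric 2-tensor h, δ_Y(đ h) = * d (δ_Y h), where (δ_Y h)_j = ∇^i h_{ij} is the divergence, * is the Hodge star from 2-forms to 1-forms, d is the exterior derivative on 1-forms, and đ is the operator (đh)_{ij} = Sym_{ij}(Σ_{k,l} ε_{ikl}(∇_k h_{lj} − ∇_l h_{kj})). -/
/-!
Contracting with `ε` kills the part of a tensor symmetric in the contracted slots, so both halves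
of `Σ_j ∇_j (đh)_{ij}` reduce to `ε`-contractions of second derivatives of `h`. What separates
them from `ε_{ikl} ∇_k ∇_a h_{al}`, and what the second half amounts to, are `ε`-contractions of
commutators `[∇_a, ∇_b] h`. In constant curvature these are algebraic in `h` and `g`, and the
symmetry of `h` makes each contraction vanish: the trace `Σ_j [∇_j, ∇_k] h_{jl}` is symmetric in
`k, l`, and `ε_{ljk} [∇_j, ∇_k] h_{li}` only leaves terms `ε_{ikl} h_{kl}`.
-/

open scoped BigOperators
open MeasureTheory

/-- Levi-Civita symbol on `Fin 3` (components of the volume form in an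
oriented orthonormal frame), with `eps 0 1 2 = 1`. -/
noncomputable def eps : Fin 3 → Fin 3 → Fin 3 → ℝ := fun i j k =>
  if (i, j, k) = (0, 1, 2) ∨ (i, j, k) = (1, 2, 0) ∨ (i, j, k) = (2, 0, 1) then 1
  else if (i, j, k) = (2, 1, 0) ∨ (i, j, k) = (1, 0, 2) ∨ (i, j, k) = (0, 2, 1) then -1
  else 0

/-- Kronecker delta: the components of the metric in an orthonormal frame. -/
noncomputable def kd : Fin 3 → Fin 3 → ℝ := fun i j => if i = j then 1 else 0

/-- The Dirac-type operator `đ`:  given `D k l j = ∇ₖ h_{lj}` (the covariant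
derivative components of a symmetric 2-tensor `h`), this is
`(đh)_{ij} = Sym_{ij} ( Σ_{k,l} ε_{ikl} (∇ₖ h_{lj} − ∇ₗ h_{kj}) )`. -/
noncomputable def dslash (D : Fin 3 → Fin 3 → Fin 3 → ℝ) (i j : Fin 3) : ℝ :=
  (1/2) * ((∑ k, ∑ l, eps i k l * (D k l j - D l k j))
    + (∑ k, ∑ l, eps j k l * (D k l i - D l k i)))

/-- Components `∇_a (đh)_{ij}` of the covariant derivative of `đh`, given the
second covariant derivative components `D2 a k l j = ∇_a ∇ₖ h_{lj}` of `h`. -/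
noncomputable def dslashD (D2 : Fin 3 → Fin 3 → Fin 3 → Fin 3 → ℝ) (a i j : Fin 3) : ℝ :=
  (1/2) * ((∑ k, ∑ l, eps i k l * (D2 a k l j - D2 a l k j))
    + (∑ k, ∑ l, eps j k l * (D2 a k l i - D2 a l k i)))

theorem eps_swap_right (i k l : Fin 3) : eps i l k = -eps i k l := by
  fin_cases i <;> fin_cases k <;> fin_cases l <;> simp +decide [eps]

theorem eps_swap_left (i k l : Fin 3) : eps k i l = -eps i k l := by
  fin_cases i <;> fin_cases k <;> fin_cases l <;> simp +decide [eps]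

theorem eps_cycle (i k l : Fin 3) : eps k l i = eps i k l := by
  rw [eps_swap_right, eps_swap_left, neg_neg]

theorem eps_self_left (i k : Fin 3) : eps i i k = 0 := by
  linarith [eps_swap_left i i k]

theorem eps_self_outer (i k : Fin 3) : eps i k i = 0 := by
  rw [eps_swap_right, eps_self_left, neg_zero]

theorem sum_eps_mul_sub_swap (i : Fin 3) (A : Fin 3 → Fin 3 → ℝ) :
    ∑ k, ∑ l, eps i k l * (A k l - A l k) = 2 * ∑ k, ∑ l, eps i k l * A k l := by
  have hswap : ∑ k, ∑ l, eps i k l * A l k = -∑ k, ∑ l, eps i k l * A k l := by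
    rw [Finset.sum_comm, ← Finset.sum_neg_distrib]
    refine Finset.sum_congr rfl fun k _ => ?_
    rw [← Finset.sum_neg_distrib]
    refine Finset.sum_congr rfl fun l _ => ?_
    rw [eps_swap_right, neg_mul]
  simp only [mul_sub, Finset.sum_sub_distrib, hswap]
  ring

theorem sum_eps_mul_eq_zero_of_symm (i : Fin 3) {S : Fin 3 → Fin 3 → ℝ}
    (hS : ∀ k l, S k l = S l k) : ∑ k, ∑ l, eps i k l * S k l = 0 := by
  have hanti : ∀ k l, S k l - S l k = 0 := fun k l => sub_eq_zero.mpr (hS k l)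
  have := sum_eps_mul_sub_swap i S
  simp only [hanti, mul_zero, Finset.sum_const_zero] at this
  linarith

section ConstantCurvature

variable {κ : ℝ} {h : Fin 3 → Fin 3 → ℝ} {D2 : Fin 3 → Fin 3 → Fin 3 → Fin 3 → ℝ}

theorem sum_commutator_contract (hsym : ∀ i j, h i j = h j i)
    (hcomm : ∀ a b c d, D2 a b c d - D2 b a c d
      = -κ * (kd b c * h a d - kd a c * h b d + kd b d * h c a - kd a d * h c b))
    (k l : Fin 3) :
    ∑ j, (D2 j k j l - D2 k j j l) = κ * (3 * h k l - kd k l * ∑ j, h j j) := by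
  simp only [hcomm, kd, ite_mul, one_mul, zero_mul, ↓reduceIte, mul_sub, mul_add, mul_ite, neg_mul,
    mul_zero, sub_neg_eq_add, Finset.sum_sub_distrib, Finset.sum_add_distrib, Finset.sum_ite_eq,
    Finset.mem_univ, Finset.sum_const, Finset.card_univ, Fintype.card_fin, nsmul_eq_mul,
    Nat.cast_ofNat, Finset.sum_ite_irrel, Finset.sum_neg_distrib, ← Finset.mul_sum,
    Finset.sum_ite_eq']
  rw [hsym l k]
  split_ifs <;> ring

theorem sum_eps_mul_sum_commute (hsym : ∀ i j, h i j = h j i)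
    (hcomm : ∀ a b c d, D2 a b c d - D2 b a c d
      = -κ * (kd b c * h a d - kd a c * h b d + kd b d * h c a - kd a d * h c b))
    (i : Fin 3) :
    ∑ k, ∑ l, eps i k l * ∑ j, D2 j k j l = ∑ k, ∑ l, eps i k l * ∑ j, D2 k j j l := by
  have hsymm : ∀ k l, ∑ j, (D2 j k j l - D2 k j j l) = ∑ j, (D2 j l j k - D2 l j j k) := by
    intro k l
    simp only [sum_commutator_contract hsym hcomm, hsym k l, kd, eq_comm]
  rw [← sub_eq_zero, ← Finset.sum_sub_distrib]
  simpa only [← Finset.sum_sub_distrib, ← mul_sub] using sum_eps_mul_eq_zero_of_symm i hsymm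

theorem sum_eps_mul_commutator_eq_zero (hsym : ∀ i j, h i j = h j i)
    (hcomm : ∀ a b c d, D2 a b c d - D2 b a c d
      = -κ * (kd b c * h a d - kd a c * h b d + kd b d * h c a - kd a d * h c b))
    (i : Fin 3) :
    ∑ l, ∑ j, ∑ k, eps l j k * (D2 j k l i - D2 k j l i) = 0 := by
  have hh := sum_eps_mul_eq_zero_of_symm i (S := fun k l => κ * h k l) fun k l => by rw [hsym]
  simp only [hcomm, kd, mul_sub, mul_add, ite_mul, one_mul, zero_mul, mul_ite, mul_zero,
    Finset.sum_add_distrib, Finset.sum_sub_distrib, Finset.sum_ite_irrel, Finset.sum_const_zero,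
    Finset.sum_ite_eq', Finset.mem_univ, if_true, eps_self_left, eps_self_outer,
    eps_cycle i, eps_swap_left i, neg_mul, mul_neg, Finset.sum_neg_distrib, hh, neg_zero,
    sub_self, add_zero]

theorem sum_eps_mul_D2_eq_zero (hsym : ∀ i j, h i j = h j i)
    (hcomm : ∀ a b c d, D2 a b c d - D2 b a c d
      = -κ * (kd b c * h a d - kd a c * h b d + kd b d * h c a - kd a d * h c b))
    (i : Fin 3) :
    ∑ j, ∑ k, ∑ l, eps j k l * D2 j k l i = 0 := by
  have hcycle : ∑ j, ∑ k, ∑ l, eps j k l * D2 j k l i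
      = ∑ l, ∑ j, ∑ k, eps l j k * D2 j k l i := by
    rw [Finset.sum_comm_cycle]
    refine Finset.sum_congr rfl fun l _ => Finset.sum_congr rfl fun j _ =>
      Finset.sum_congr rfl fun k _ => by rw [eps_cycle l]
  have := sum_eps_mul_commutator_eq_zero hsym hcomm i
  simp only [sum_eps_mul_sub_swap, ← Finset.mul_sum] at this
  linarith

end ConstantCurvature

theorem statement5_general (κ : ℝ) (h : Fin 3 → Fin 3 → ℝ)
    (D2 : Fin 3 → Fin 3 → Fin 3 → Fin 3 → ℝ)
    (hsym : ∀ i j, h i j = h j i)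
    (hD2sym : ∀ a k l j, D2 a k l j = D2 a k j l)
    (hcomm : ∀ a b c d, D2 a b c d - D2 b a c d
      = -κ * (kd b c * h a d - kd a c * h b d + kd b d * h c a - kd a d * h c b)) :
    ∀ i, (∑ j, dslashD D2 j i j)
      = ∑ k, ∑ l, eps i k l * (∑ a, D2 k a a l) := by
  intro i
  have hfirst : ∑ j, ∑ k, ∑ l, eps i k l * (D2 j k l j - D2 j l k j)
      = 2 * ∑ k, ∑ l, eps i k l * ∑ a, D2 k a a l := by
    rw [← sum_eps_mul_sum_commute hsym hcomm]
    simp only [sum_eps_mul_sub_swap, ← Finset.mul_sum]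
    congr 1
    simp only [Finset.mul_sum]
    conv_rhs => rw [Finset.sum_comm_cycle]
    exact Finset.sum_congr rfl fun j _ => Finset.sum_congr rfl fun k _ =>
      Finset.sum_congr rfl fun l _ => by rw [hD2sym]
  have hsecond : ∑ j, ∑ k, ∑ l, eps j k l * (D2 j k l i - D2 j l k i) = 0 := by
    simp only [sum_eps_mul_sub_swap, ← Finset.mul_sum, sum_eps_mul_D2_eq_zero hsym hcomm, mul_zero]
  simp only [dslashD, ← Finset.mul_sum, Finset.sum_add_distrib, hfirst, hsecond]
  ring

/-- on an oriented 3-manifold of constant sectional curvature κ,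
`δ_Y(đh) = *d(δ_Y h)` for any symmetric 2-tensor `h`.  Components at a point
in an oriented orthonormal frame: `h`, `D1 k l j = ∇ₖ h_{lj}`,
`D2 a k l j = ∇_a ∇ₖ h_{lj}`; constant curvature enters through the
commutation rule for second covariant derivatives of a 2-tensor.
The left side is `(δ_Y(đh))_i = Σ_j ∇_j (đh)_{ij}`, the right side is
`(*d(δ_Y h))_i = Σ ε_{ikl} ∇ₖ (δ_Y h)_l` with `(δ_Y h)_l = Σ_a ∇_a h_{al}`. -/
theorem statement5 (κ : ℝ) (h : Fin 3 → Fin 3 → ℝ)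
    (D1 : Fin 3 → Fin 3 → Fin 3 → ℝ)
    (D2 : Fin 3 → Fin 3 → Fin 3 → Fin 3 → ℝ)
    (hsym : ∀ i j, h i j = h j i)
    (hD1sym : ∀ k l j, D1 k l j = D1 k j l)
    (hD2sym : ∀ a k l j, D2 a k l j = D2 a k j l)
    (hcomm : ∀ a b c d, D2 a b c d - D2 b a c d
      = -κ * (kd b c * h a d - kd a c * h b d + kd b d * h c a - kd a d * h c b)) :
    ∀ i, (∑ j, dslashD D2 j i j)
      = ∑ k, ∑ l, eps i k l * (∑ a, D2 k a a l) :=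
  statement5_general κ h D2 hsym hD2sym hcomm
end

section
/- Let (Y,g) be a Riemannian 3-manifold of constant sectional curvature κ. For every 1-form ω: Δ_g K_g(ω) = K_g((Δ_g + 4κ)ω), where Δ_g denotes the rough Laplacian (on symmetric 2-tensors on the left, and on 1-forms on the right) and K_g is the conformal Killing operator. -/
open scoped BigOperators
open MeasureTheory

/-!
Applying the constant-curvature Ricci identity twice moves `∇ᵢ` past both derivatives of the
Laplacian: `Σₐ ∇ₐ∇ₐ∇ᵢωⱼ = ∇ᵢ(Δω)ⱼ + 2κ(∇ᵢωⱼ + ∇ⱼωᵢ) − 2κ δᵢⱼ div ω`. Symmetrizing in `i, j`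
produces the `4κ` term, and the `δᵢⱼ div ω` terms agree with those coming from the trace part
of `K_g`.
-/

lemma kd_comm (i j : Fin 3) : kd i j = kd j i := by
  simp only [kd, eq_comm]

lemma sum_kd_mul (f : Fin 3 → ℝ) (j : Fin 3) : ∑ a, kd a j * f a = f j := by
  simp [kd]

lemma sum_kd_mul' (f : Fin 3 → ℝ) (i : Fin 3) : ∑ a, kd i a * f a = f i := by
  simp [kd]

lemma sum_kd_self : ∑ a : Fin 3, kd a a = 3 := by
  simp [kd]

lemma laplacian_covDeriv_comm (κ : ℝ) (Dω : Fin 3 → Fin 3 → ℝ)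
    (D3 : Fin 3 → Fin 3 → Fin 3 → Fin 3 → ℝ)
    (hcomm12 : ∀ a b c d, D3 a b c d - D3 b a c d
      = -κ * (kd b c * Dω a d - kd a c * Dω b d + kd b d * Dω c a - kd a d * Dω c b))
    (hcomm23 : ∀ a b c d, D3 a b c d - D3 a c b d
      = -κ * (kd c d * Dω a b - kd b d * Dω a c)) (i j : Fin 3) :
    ∑ a, D3 a a i j
      = ∑ a, D3 i a a j + 2 * κ * (Dω i j + Dω j i) - 2 * κ * kd i j * ∑ a, Dω a a := by
  have commute : ∀ a, D3 a a i j = D3 i a a j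
      - κ * (kd i j * Dω a a - kd a j * Dω a i)
      - κ * (kd i a * Dω a j - kd a a * Dω i j + kd i j * Dω a a - kd a j * Dω a i) :=
    fun a => by linarith [hcomm23 a a i j, hcomm12 a i a j]
  simp only [Finset.sum_congr rfl fun a _ => commute a, Finset.sum_sub_distrib,
    Finset.sum_add_distrib, ← Finset.mul_sum, ← Finset.sum_mul, sum_kd_mul, sum_kd_mul',
    sum_kd_self]
  ring

lemma trace_laplacian_covDeriv_comm (κ : ℝ) (Dω : Fin 3 → Fin 3 → ℝ)
    (D3 : Fin 3 → Fin 3 → Fin 3 → Fin 3 → ℝ)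
    (hcomm12 : ∀ a b c d, D3 a b c d - D3 b a c d
      = -κ * (kd b c * Dω a d - kd a c * Dω b d + kd b d * Dω c a - kd a d * Dω c b))
    (hcomm23 : ∀ a b c d, D3 a b c d - D3 a c b d
      = -κ * (kd c d * Dω a b - kd b d * Dω a c)) :
    ∑ a, ∑ k, D3 a a k k = ∑ k, ∑ a, D3 k a a k - 2 * κ * ∑ a, Dω a a := by
  rw [Finset.sum_comm]
  simp only [laplacian_covDeriv_comm κ Dω D3 hcomm12 hcomm23, Finset.sum_sub_distrib,
    Finset.sum_add_distrib, ← Finset.mul_sum, ← Finset.sum_mul, sum_kd_self]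
  ring

/-- Components at a point in an orthonormal frame: `Dω a b = ∇ₐω_b` and
`D3 a b c d = ∇ₐ∇_b∇_c ω_d`, subject to the constant-curvature commutation rules.
Left side: `(Δ_g K_g(ω))ᵢⱼ`; right side: `K_g` applied to `Δ_g ω + 4κω`. -/
theorem statement9_general (κ : ℝ)
    (Dω : Fin 3 → Fin 3 → ℝ)
    (D3 : Fin 3 → Fin 3 → Fin 3 → Fin 3 → ℝ)
    (hcomm12 : ∀ a b c d, D3 a b c d - D3 b a c d
      = -κ * (kd b c * Dω a d - kd a c * Dω b d + kd b d * Dω c a - kd a d * Dω c b))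
    (hcomm23 : ∀ a b c d, D3 a b c d - D3 a c b d
      = -κ * (kd c d * Dω a b - kd b d * Dω a c)) :
    ∀ i j,
      (∑ a, (D3 a a i j + D3 a a j i)) - (2/3) * (∑ a, ∑ k, D3 a a k k) * kd i j
        = ((∑ a, D3 i a a j) + 4 * κ * Dω i j)
          + ((∑ a, D3 j a a i) + 4 * κ * Dω j i)
          - (2/3) * (∑ k, ((∑ a, D3 k a a k) + 4 * κ * Dω k k)) * kd i j := by
  intro i j
  have hij := laplacian_covDeriv_comm κ Dω D3 hcomm12 hcomm23 i j
  have hji := laplacian_covDeriv_comm κ Dω D3 hcomm12 hcomm23 j i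
  rw [kd_comm j i] at hji
  have htr := trace_laplacian_covDeriv_comm κ Dω D3 hcomm12 hcomm23
  simp only [Finset.sum_add_distrib, ← Finset.mul_sum]
  linear_combination hij + hji - (2 / 3) * kd i j * htr

/-- on a 3-manifold of constant sectional curvature κ, for every
1-form `ω`: `Δ_g K_g(ω) = K_g((Δ_g + 4κ)ω)`.  Components at a point in an
orthonormal frame: `ω`, `Dω a b = ∇_a ω_b`, `D2 a b c = ∇_a∇_b ω_c`,
`D3 a b c d = ∇_a∇_b∇_c ω_d`, with the constant-curvature commutation rules.
Left side: `(Δ_g K_g(ω))_{ij} = Σ_a ∇_a∇_a K_g(ω)_{ij}`; right side: `K_g`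
applied to `(Δ_g ω + 4κω)_j = Σ_a D2 a a j + 4κ ω_j`. -/
theorem statement9 (κ : ℝ) (ω : Fin 3 → ℝ)
    (Dω : Fin 3 → Fin 3 → ℝ) (D2 : Fin 3 → Fin 3 → Fin 3 → ℝ)
    (D3 : Fin 3 → Fin 3 → Fin 3 → Fin 3 → ℝ)
    (hcomm2 : ∀ a b c, D2 a b c - D2 b a c = -κ * (kd b c * ω a - kd a c * ω b))
    (hcomm12 : ∀ a b c d, D3 a b c d - D3 b a c d
      = -κ * (kd b c * Dω a d - kd a c * Dω b d + kd b d * Dω c a - kd a d * Dω c b))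
    (hcomm23 : ∀ a b c d, D3 a b c d - D3 a c b d
      = -κ * (kd c d * Dω a b - kd b d * Dω a c)) :
    ∀ i j,
      (∑ a, (D3 a a i j + D3 a a j i)) - (2/3) * (∑ a, ∑ k, D3 a a k k) * kd i j
        = ((∑ a, D3 i a a j) + 4 * κ * Dω i j)
          + ((∑ a, D3 j a a i) + 4 * κ * Dω j i)
          - (2/3) * (∑ k, ((∑ a, D3 k a a k) + 4 * κ * Dω k k)) * kd i j :=
  statement9_general κ Dω D3 hcomm12 hcomm23
end
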